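/- arXiv:2603.16383 — 2 statements merged into one kernel-verified Lean document; each statement's English description precedes it below -/
import Mathlib

section
/- Under assumptions (A) and (A+), fix (s, x) ∈ [0,T) × X and let z_t(η) denote the unique solution of the variational integral equation z_t = S_{t−s} η + ∫_s^t S_{t−τ}( Df_τ(y_τ) z_τ + DG_τ(y_τ)[z_τ] ū(τ) ) dτ, where y_τ := Φ̄_{s,τ}(x). Then there exists a constant M_4 ≥ 0, independent of η, such that for all η in a sufficiently small ball around the origin of X, sup_{t∈[s,T]} ‖ Φ̄_{s,t}(x + η) − Φ̄_{s,t}(x) − z_t(η) ‖_X ≤ M_4 ‖η‖_X² (a second-order remainder estimate). -/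
/-!
The semigroup is uniformly bounded on `[0, T]` by Banach–Steinhaus and the controls by
compactness of `U`, so the field `F_τ(v) = f_τ(v) + G_τ(v) ū(τ)` is Lipschitz with a
derivative that is bounded and Lipschitz. The difference `w = Φ(x + η) - Φ(x)` solves a mild
equation with Lipschitz right-hand side, and Grönwall gives `‖w‖ ≤ C₁ ‖η‖`. The remainder
`r = w - z` solves `r(t) = ∫ S(t - τ) [(F(Φ(x + η)) - F(Φ(x)) - DF(Φ(x)) w) + DF(Φ(x)) r]`,
where the first summand is `O(‖w‖²) = O(‖η‖²)` by Taylor's formula; a second Grönwall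
estimate gives `‖r‖ ≤ M₄ ‖η‖²`, for every `η`.
-/

open MeasureTheory Set
open scoped RealInnerProductSpace

noncomputable section

/-- `φ` is a mild solution on `[s,T]` with initial data `(s, x)` for the semigroup `S`. -/
def IsMildSol {X : Type*} [NormedAddCommGroup X] [NormedSpace ℝ X]
    (T : ℝ) (S : ℝ → X →L[ℝ] X) (F : ℝ → X → X) (s : ℝ) (x : X) (φ : ℝ → X) : Prop :=
  ContinuousOn φ (Set.Icc s T) ∧
    ∀ t ∈ Set.Icc s T, φ t = S (t - s) x + ∫ τ in s..t, S (t - τ) (F τ (φ τ))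

open Filter Topology

theorem aestronglyMeasurable_comp_of_caratheodory {α X Y : Type*} [MeasurableSpace α]
    {μ : Measure α} [TopologicalSpace X] [TopologicalSpace Y] [AddCommMonoid Y] [ContinuousAdd Y]
    [TopologicalSpace.PseudoMetrizableSpace Y] {f : α → X → Y}
    (hmeas : ∀ x, AEStronglyMeasurable (fun t => f t x) μ) (hcont : ∀ᵐ t ∂μ, Continuous (f t))
    {g : α → X} (hg : AEStronglyMeasurable g μ) :
    AEStronglyMeasurable (fun t => f t (g t)) μ := by
  obtain ⟨g', hg'sm, hgg'⟩ := hg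
  have hsimple (φ : SimpleFunc α X) : AEStronglyMeasurable (fun t => f t (φ t)) μ := by
    have hsum : (fun t => f t (φ t)) =
        fun t => ∑ c ∈ φ.range, (φ ⁻¹' {c}).indicator (fun t => f t c) t := by
      funext t
      rw [Finset.sum_eq_single_of_mem (φ t) (φ.mem_range_self t)]
      · exact (indicator_of_mem (show t ∈ φ ⁻¹' {φ t} from rfl) (fun t' => f t' (φ t))).symm
      · exact fun c _ hc => indicator_of_notMem (fun h => hc h.symm) _
    rw [hsum]
    exact Finset.aestronglyMeasurable_fun_sum _ fun c _ =>
      (hmeas c).indicator (φ.measurableSet_fiber c)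
  refine aestronglyMeasurable_of_tendsto_ae atTop (fun n => hsimple (hg'sm.approx n)) ?_
  filter_upwards [hcont, hgg'] with t ht htg
  rw [htg]
  exact (ht.tendsto _).comp (hg'sm.tendsto_approx t)

theorem continuous_clm_flip_apply {E F G : Type*} [NormedAddCommGroup E] [NormedSpace ℝ E]
    [NormedAddCommGroup F] [NormedSpace ℝ F] [NormedAddCommGroup G] [NormedSpace ℝ G] :
    Continuous fun p : (E →L[ℝ] F →L[ℝ] G) × F => p.1.flip p.2 :=
  isBoundedBilinearMap_apply.continuous.comp
    ((ContinuousLinearMap.flipₗᵢ ℝ E F G).continuous.prodMap continuous_id)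

theorem MeasureTheory.AEStronglyMeasurable.clm_flip_apply {α E F G : Type*} [MeasurableSpace α]
    {μ : Measure α} [NormedAddCommGroup E] [NormedSpace ℝ E] [NormedAddCommGroup F]
    [NormedSpace ℝ F] [NormedAddCommGroup G] [NormedSpace ℝ G] {A : α → E →L[ℝ] F →L[ℝ] G}
    {u : α → F} (hA : AEStronglyMeasurable A μ) (hu : AEStronglyMeasurable u μ) :
    AEStronglyMeasurable (fun t => (A t).flip (u t)) μ := by
  simpa only [Function.comp_def] using
    continuous_clm_flip_apply.comp_aestronglyMeasurable (hA.prodMk hu)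

theorem exists_norm_le_of_continuousOn_apply {α 𝕜 E F : Type*} [TopologicalSpace α]
    [NontriviallyNormedField 𝕜] [NormedAddCommGroup E] [NormedSpace 𝕜 E] [CompleteSpace E]
    [NormedAddCommGroup F] [NormedSpace 𝕜 F] {K : Set α} (hK : IsCompact K)
    {S : α → E →L[𝕜] F} (hS : ∀ x, ContinuousOn (fun σ => S σ x) K) :
    ∃ C, 0 ≤ C ∧ ∀ σ ∈ K, ‖S σ‖ ≤ C := by
  obtain ⟨C, hC⟩ := banach_steinhaus (g := fun σ : K => S σ) fun x => by
    obtain ⟨C, hC⟩ := hK.exists_bound_of_continuousOn (hS x)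
    exact ⟨C, fun σ => hC σ σ.2⟩
  exact ⟨max C 0, le_max_right _ _, fun σ hσ => (hC ⟨σ, hσ⟩).trans (le_max_left _ _)⟩

theorem integrableOn_clm_apply_of_continuousOn {E F : Type*} [NormedAddCommGroup E]
    [NormedSpace ℝ E] [NormedAddCommGroup F] [NormedSpace ℝ F] {K : ℝ → E →L[ℝ] F}
    {v : ℝ → E} {s : Set ℝ} {C : ℝ} (hs : MeasurableSet s)
    (hK : ∀ x, ContinuousOn (fun τ => K τ x) s) (hKC : ∀ τ ∈ s, ‖K τ‖ ≤ C)
    (hv : IntegrableOn v s) : IntegrableOn (fun τ => K τ (v τ)) s := by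
  refine Integrable.mono' (hv.norm.const_mul C)
    (aestronglyMeasurable_comp_of_caratheodory (fun x => (hK x).aestronglyMeasurable hs)
      (ae_of_all _ fun τ => (K τ).continuous) hv.aestronglyMeasurable) ?_
  filter_upwards [ae_restrict_mem hs] with τ hτ
  exact (K τ).le_of_opNorm_le (hKC τ hτ) _

theorem integrableOn_comp_of_lipschitz {X Y : Type*} [NormedAddCommGroup X] [NormedAddCommGroup Y]
    {F : ℝ → X → Y} {w : ℝ → X} {s T L c : ℝ}
    (hFmeas : ∀ v, AEStronglyMeasurable (fun τ => F τ v) (volume.restrict (Icc s T)))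
    (hFLip : ∀ᵐ τ ∂volume.restrict (Icc s T), ∀ v v', ‖F τ v - F τ v'‖ ≤ L * ‖v - v'‖)
    (hF0 : ∀ᵐ τ ∂volume.restrict (Icc s T), ‖F τ 0‖ ≤ c) (hw : ContinuousOn w (Icc s T)) :
    IntegrableOn (fun τ => F τ (w τ)) (Icc s T) := by
  have hcont : ∀ᵐ τ ∂volume.restrict (Icc s T), Continuous (F τ) := by
    filter_upwards [hFLip] with τ hτ
    exact (LipschitzWith.of_dist_le' fun v v' => by
      simpa only [dist_eq_norm] using hτ v v').continuous
  refine Integrable.mono' (g := fun τ => c + L * ‖w τ‖)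
    (continuousOn_const.add (continuousOn_const.mul hw.norm)).integrableOn_Icc
    (aestronglyMeasurable_comp_of_caratheodory hFmeas hcont
      (hw.aestronglyMeasurable measurableSet_Icc)) ?_
  filter_upwards [hFLip, hF0] with τ hLip h0
  calc ‖F τ (w τ)‖ ≤ ‖F τ 0‖ + ‖F τ (w τ) - F τ 0‖ := norm_le_insert' _ _
    _ ≤ c + L * ‖w τ‖ := by simpa using add_le_add h0 (hLip (w τ) 0)

theorem le_mul_exp_of_le_add_mul_integral {g : ℝ → ℝ} {a L s T : ℝ} (hL : 0 ≤ L)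
    (hg : ContinuousOn g (Icc s T)) (h : ∀ t ∈ Icc s T, g t ≤ a + L * ∫ τ in s..t, g τ) :
    ∀ t ∈ Icc s T, g t ≤ a * Real.exp (L * (t - s)) := by
  intro t ht
  set B : ℝ → ℝ := fun t => a + L * ∫ τ in s..t, g τ
  have hBcont : ContinuousOn B (Icc s T) := by
    have hprim := intervalIntegral.continuousOn_primitive_interval (μ := volume)
      (uIcc_of_le (ht.1.trans ht.2) ▸ hg.integrableOn_Icc)
    rw [uIcc_of_le (ht.1.trans ht.2)] at hprim
    exact (hprim.const_smul L).const_add a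
  -- `B' = L g ≤ L B`, so the differential Grönwall inequality bounds `B`, hence `g ≤ B`.
  have hBderiv : ∀ t ∈ Ico s T, HasDerivWithinAt B (L * g t) (Ici t) t := by
    intro t ht
    have hnhds : Icc s T ∈ 𝓝[>] t := Icc_mem_nhdsGT_of_mem ht
    exact ((intervalIntegral.integral_hasDerivWithinAt_right (t := Ioi t)
      ((hg.mono (Icc_subset_Icc le_rfl ht.2.le)).intervalIntegrable_of_Icc ht.1)
      ((hg.stronglyMeasurableAtFilter_nhdsWithin measurableSet_Icc t).filter_mono
        (nhdsWithin_le_of_mem hnhds))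
      ((hg t (Ico_subset_Icc_self ht)).mono_of_mem_nhdsWithin hnhds)).const_mul L).const_add a
  have hgron := le_gronwallBound_of_liminf_deriv_right_le (δ := a) (ε := 0) hBcont
    (fun t ht _ hr => (hBderiv t ht).liminf_right_slope_le hr) (by simp [B])
    (fun t ht => by simpa using mul_le_mul_of_nonneg_left (h t (Ico_subset_Icc_self ht)) hL) t ht
  rw [gronwallBound_ε0] at hgron
  exact (h t ht).trans hgron

theorem norm_sub_sub_le_of_lipschitz_fderiv {E F : Type*} [NormedAddCommGroup E]
    [NormedSpace ℝ E] [NormedAddCommGroup F] [NormedSpace ℝ F] {φ : E → F} {φ' : E → E →L[ℝ] F}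
    {K : ℝ} (hK : 0 ≤ K) (hφ : ∀ v, HasFDerivAt φ (φ' v) v)
    (hφ' : ∀ v w, ‖φ' v - φ' w‖ ≤ K * ‖v - w‖) (a b : E) :
    ‖φ a - φ b - φ' b (a - b)‖ ≤ K * ‖a - b‖ ^ 2 := by
  have hbound : ∀ v ∈ segment ℝ b a, ‖φ' v - φ' b‖ ≤ K * ‖a - b‖ := by
    rintro _ ⟨p, q, hp, hq, hpq, rfl⟩
    refine (hφ' _ _).trans (mul_le_mul_of_nonneg_left ?_ hK)
    have hdiff : p • b + q • a - b = q • (a - b) := by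
      rw [eq_sub_of_add_eq hpq]; module
    rw [hdiff, norm_smul, Real.norm_of_nonneg hq]
    exact mul_le_of_le_one_left (norm_nonneg _) (by linarith)
  calc ‖φ a - φ b - φ' b (a - b)‖ ≤ K * ‖a - b‖ * ‖a - b‖ :=
        (convex_segment b a).norm_image_sub_le_of_norm_hasFDerivWithin_le'
          (fun v _ => (hφ v).hasFDerivWithinAt) hbound
          (left_mem_segment ℝ b a) (right_mem_segment ℝ b a)
    _ = K * ‖a - b‖ ^ 2 := by ring

section MildSolution

variable {X : Type*} [NormedAddCommGroup X] [NormedSpace ℝ X] {S : ℝ → X →L[ℝ] X} {s T C : ℝ}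

theorem intervalIntegrable_semigroup_apply (hScont : ∀ x, ContinuousOn (fun σ => S σ x) (Ici 0))
    (hC : ∀ σ ∈ Icc 0 (T - s), ‖S σ‖ ≤ C) {v : ℝ → X} (hv : IntegrableOn v (Icc s T))
    {t : ℝ} (ht : t ∈ Icc s T) : IntervalIntegrable (fun τ => S (t - τ) (v τ)) volume s t := by
  refine (intervalIntegrable_iff_integrableOn_Icc_of_le ht.1).2
    (integrableOn_clm_apply_of_continuousOn (C := C) measurableSet_Icc (fun x => ?_)
      (fun τ hτ => ?_) (hv.mono_set (Icc_subset_Icc_right ht.2)))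
  · exact (hScont x).comp (continuous_const.sub continuous_id).continuousOn
      fun τ hτ => sub_nonneg.2 hτ.2
  · exact hC _ ⟨sub_nonneg.2 hτ.2, by linarith [hτ.1, ht.2]⟩

theorem mild_sub_eq {t : ℝ} {a₁ a₂ w₁ w₂ : X} {h₁ h₂ : ℝ → X}
    (hi₁ : IntervalIntegrable (fun τ => S (t - τ) (h₁ τ)) volume s t)
    (hi₂ : IntervalIntegrable (fun τ => S (t - τ) (h₂ τ)) volume s t)
    (hw₁ : w₁ = S (t - s) a₁ + ∫ τ in s..t, S (t - τ) (h₁ τ))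
    (hw₂ : w₂ = S (t - s) a₂ + ∫ τ in s..t, S (t - τ) (h₂ τ)) :
    w₁ - w₂ = S (t - s) (a₁ - a₂) + ∫ τ in s..t, S (t - τ) (h₁ τ - h₂ τ) := by
  simp only [map_sub]
  rw [intervalIntegral.integral_sub hi₁ hi₂, hw₁, hw₂]
  abel

theorem norm_le_of_mild_eq {a b L : ℝ} {w e h : ℝ → X} (hC : ∀ σ ∈ Icc 0 (T - s), ‖S σ‖ ≤ C)
    (hC0 : 0 ≤ C) (hb : 0 ≤ b) (hL : 0 ≤ L) (hw : ContinuousOn w (Icc s T))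
    (he : ∀ t ∈ Icc s T, ‖e t‖ ≤ a)
    (hh : ∀ᵐ τ ∂volume.restrict (Icc s T), ‖h τ‖ ≤ b + L * ‖w τ‖)
    (heq : ∀ t ∈ Icc s T, w t = e t + ∫ τ in s..t, S (t - τ) (h τ)) :
    ∀ t ∈ Icc s T, ‖w t‖ ≤ (a + C * b * (T - s)) * Real.exp (C * L * (T - s)) := by
  have hint : ∀ t ∈ Icc s T, ‖w t‖ ≤ a + C * b * (T - s) + C * L * ∫ τ in s..t, ‖w τ‖ := by
    intro t ht
    have hwi : IntervalIntegrable (fun τ => ‖w τ‖) volume s t :=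
      (hw.norm.mono (Icc_subset_Icc_right ht.2)).intervalIntegrable_of_Icc ht.1
    have hconv : ‖∫ τ in s..t, S (t - τ) (h τ)‖ ≤ ∫ τ in s..t, C * (b + L * ‖w τ‖) := by
      refine intervalIntegral.norm_integral_le_of_norm_le ht.1 ?_
        ((intervalIntegrable_const.add (hwi.const_mul L)).const_mul C)
      filter_upwards [(ae_restrict_iff' measurableSet_Icc).1 hh] with τ hτ hmem
      have hτ' : τ ∈ Icc s T := ⟨hmem.1.le, hmem.2.trans ht.2⟩
      exact (S (t - τ)).le_of_opNorm_le_of_le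
        (hC _ ⟨sub_nonneg.2 hmem.2, by linarith [hmem.1, ht.2]⟩) (hτ hτ')
    have hval : ∫ τ in s..t, C * (b + L * ‖w τ‖) =
        C * b * (t - s) + C * L * ∫ τ in s..t, ‖w τ‖ := by
      rw [intervalIntegral.integral_const_mul, intervalIntegral.integral_add
        intervalIntegrable_const (hwi.const_mul L), intervalIntegral.integral_const,
        intervalIntegral.integral_const_mul, smul_eq_mul]
      ring
    have hts : C * b * (t - s) ≤ C * b * (T - s) := by
      gcongr; exact ht.2
    calc ‖w t‖ ≤ ‖e t‖ + ‖∫ τ in s..t, S (t - τ) (h τ)‖ := heq t ht ▸ norm_add_le _ _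
      _ ≤ _ := by linarith [he t ht]
  intro t ht
  have hA : 0 ≤ a + C * b * (T - s) :=
    add_nonneg ((norm_nonneg _).trans (he s ⟨le_rfl, ht.1.trans ht.2⟩))
      (mul_nonneg (mul_nonneg hC0 hb) (by linarith [ht.1, ht.2]))
  calc ‖w t‖ ≤ (a + C * b * (T - s)) * Real.exp (C * L * (t - s)) :=
        le_mul_exp_of_le_add_mul_integral (mul_nonneg hC0 hL) hw.norm hint t ht
    _ ≤ (a + C * b * (T - s)) * Real.exp (C * L * (T - s)) := by
        gcongr; exact ht.2

end MildSolution

namespace IsMildSol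

variable {X : Type*} [NormedAddCommGroup X] [NormedSpace ℝ X] {S : ℝ → X →L[ℝ] X}
  {s T C L c : ℝ} {F : ℝ → X → X}

theorem intervalIntegrable (hScont : ∀ x, ContinuousOn (fun σ => S σ x) (Ici 0))
    (hC : ∀ σ ∈ Icc 0 (T - s), ‖S σ‖ ≤ C)
    (hFmeas : ∀ v, AEStronglyMeasurable (fun τ => F τ v) (volume.restrict (Icc s T)))
    (hFLip : ∀ᵐ τ ∂volume.restrict (Icc s T), ∀ v v', ‖F τ v - F τ v'‖ ≤ L * ‖v - v'‖)
    (hF0 : ∀ᵐ τ ∂volume.restrict (Icc s T), ‖F τ 0‖ ≤ c) {x : X} {y : ℝ → X}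
    (hy : IsMildSol T S F s x y) {t : ℝ} (ht : t ∈ Icc s T) :
    IntervalIntegrable (fun τ => S (t - τ) (F τ (y τ))) volume s t :=
  intervalIntegrable_semigroup_apply hScont hC
    (integrableOn_comp_of_lipschitz hFmeas hFLip hF0 hy.1) ht

theorem norm_sub_le (hScont : ∀ x, ContinuousOn (fun σ => S σ x) (Ici 0))
    (hC : ∀ σ ∈ Icc 0 (T - s), ‖S σ‖ ≤ C) (hC0 : 0 ≤ C) (hL : 0 ≤ L)
    (hFmeas : ∀ v, AEStronglyMeasurable (fun τ => F τ v) (volume.restrict (Icc s T)))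
    (hFLip : ∀ᵐ τ ∂volume.restrict (Icc s T), ∀ v v', ‖F τ v - F τ v'‖ ≤ L * ‖v - v'‖)
    (hF0 : ∀ᵐ τ ∂volume.restrict (Icc s T), ‖F τ 0‖ ≤ c) {x₁ x₂ : X} {y₁ y₂ : ℝ → X}
    (hy₁ : IsMildSol T S F s x₁ y₁) (hy₂ : IsMildSol T S F s x₂ y₂) :
    ∀ t ∈ Icc s T, ‖y₁ t - y₂ t‖ ≤ C * Real.exp (C * L * (T - s)) * ‖x₁ - x₂‖ := by
  intro t ht
  have hgron := norm_le_of_mild_eq (a := C * ‖x₁ - x₂‖) (b := 0)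
    (e := fun t => S (t - s) (x₁ - x₂)) (h := fun τ => F τ (y₁ τ) - F τ (y₂ τ))
    hC hC0 le_rfl hL (hy₁.1.sub hy₂.1)
    (fun t ht => (S (t - s)).le_of_opNorm_le (hC _ ⟨sub_nonneg.2 ht.1, by linarith [ht.2]⟩) _)
    (by filter_upwards [hFLip] with τ hτ; simpa using hτ (y₁ τ) (y₂ τ))
    (fun t ht => mild_sub_eq (hy₁.intervalIntegrable hScont hC hFmeas hFLip hF0 ht)
      (hy₂.intervalIntegrable hScont hC hFmeas hFLip hF0 ht) (hy₁.2 t ht) (hy₂.2 t ht)) t ht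
  simpa [mul_right_comm] using hgron

theorem norm_sub_sub_le_mul_sq (hScont : ∀ x, ContinuousOn (fun σ => S σ x) (Ici 0))
    (hC : ∀ σ ∈ Icc 0 (T - s), ‖S σ‖ ≤ C) (hC0 : 0 ≤ C) (hL : 0 ≤ L)
    (hFmeas : ∀ v, AEStronglyMeasurable (fun τ => F τ v) (volume.restrict (Icc s T)))
    (hFLip : ∀ᵐ τ ∂volume.restrict (Icc s T), ∀ v v', ‖F τ v - F τ v'‖ ≤ L * ‖v - v'‖)
    (hF0 : ∀ᵐ τ ∂volume.restrict (Icc s T), ‖F τ 0‖ ≤ c) {F' : ℝ → X → X →L[ℝ] X} {K : ℝ}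
    (hK : 0 ≤ K)
    (hF'meas : ∀ v, AEStronglyMeasurable (fun τ => F' τ v) (volume.restrict (Icc s T)))
    (hF'cont : ∀ᵐ τ ∂volume.restrict (Icc s T), Continuous (F' τ))
    (hF'bd : ∀ᵐ τ ∂volume.restrict (Icc s T), ∀ v, ‖F' τ v‖ ≤ K)
    (hrem : ∀ᵐ τ ∂volume.restrict (Icc s T),
      ∀ v v', ‖F τ v - F τ v' - F' τ v' (v - v')‖ ≤ K * ‖v - v'‖ ^ 2)
    {x η : X} {Y y z : ℝ → X} (hY : IsMildSol T S F s (x + η) Y) (hy : IsMildSol T S F s x y)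
    (hz : IsMildSol T S (fun τ v => F' τ (y τ) v) s η z) :
    ∀ t ∈ Icc s T, ‖Y t - y t - z t‖ ≤ C * K * (C * Real.exp (C * L * (T - s))) ^ 2 *
      Real.exp (C * K * (T - s)) * (T - s) * ‖η‖ ^ 2 := by
  set C₁ := C * Real.exp (C * L * (T - s))
  have hD : ∀ t ∈ Icc s T, ‖Y t - y t‖ ≤ C₁ * ‖η‖ := by
    simpa using hY.norm_sub_le hScont hC hC0 hL hFmeas hFLip hF0 hy
  have hLmeas : ∀ v, AEStronglyMeasurable (fun τ => F' τ (y τ) v) (volume.restrict (Icc s T)) :=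
    (aestronglyMeasurable_comp_of_caratheodory hF'meas hF'cont
      (hy.1.aestronglyMeasurable measurableSet_Icc)).apply_continuousLinearMap
  have hLLip : ∀ᵐ τ ∂volume.restrict (Icc s T),
      ∀ v v', ‖F' τ (y τ) v - F' τ (y τ) v'‖ ≤ K * ‖v - v'‖ := by
    filter_upwards [hF'bd] with τ hτ v v'
    rw [← map_sub]
    exact (F' τ (y τ)).le_of_opNorm_le (hτ _) _
  have heq : ∀ t ∈ Icc s T, Y t - y t - z t =
      0 + ∫ τ in s..t, S (t - τ) (F τ (Y τ) - F τ (y τ) - F' τ (y τ) (z τ)) := by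
    intro t ht
    have hiY := hY.intervalIntegrable hScont hC hFmeas hFLip hF0 ht
    have hiy := hy.intervalIntegrable hScont hC hFmeas hFLip hF0 ht
    have hiz := hz.intervalIntegrable hScont hC hLmeas hLLip (c := 0) (by simp) ht
    simpa using mild_sub_eq (by simpa only [map_sub] using hiY.sub hiy) hiz
      (mild_sub_eq hiY hiy (hY.2 t ht) (hy.2 t ht)) (hz.2 t ht)
  refine fun t ht => (norm_le_of_mild_eq (a := 0) (e := fun _ => 0) hC hC0
    (mul_nonneg hK (sq_nonneg (C₁ * ‖η‖))) hK ((hY.1.sub hy.1).sub hz.1) (by simp) ?_ heq t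
    ht).trans_eq (by ring)
  filter_upwards [hrem, hF'bd, ae_restrict_mem measurableSet_Icc] with τ hτrem hτbd hτ
  calc ‖F τ (Y τ) - F τ (y τ) - F' τ (y τ) (z τ)‖
      = ‖(F τ (Y τ) - F τ (y τ) - F' τ (y τ) (Y τ - y τ)) + F' τ (y τ) (Y τ - y τ - z τ)‖ := by
        simp only [map_sub]; abel_nf
    _ ≤ K * ‖Y τ - y τ‖ ^ 2 + K * ‖Y τ - y τ - z τ‖ :=
        norm_add_le_of_le (hτrem _ _) ((F' τ (y τ)).le_of_opNorm_le (hτbd _) _)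
    _ ≤ K * (C₁ * ‖η‖) ^ 2 + K * ‖Y τ - y τ - z τ‖ := by
        gcongr; exact hD τ hτ

end IsMildSol

section ControlAffine

variable {X E : Type*} [NormedAddCommGroup X] [NormedSpace ℝ X] [NormedAddCommGroup E]
  [NormedSpace ℝ E] {φ : X → X} {ψ : X → E →L[ℝ] X} {u : E} {R : ℝ}

theorem norm_add_flip_apply_le {A : X →L[ℝ] X} {B : X →L[ℝ] E →L[ℝ] X} {a b : ℝ} (hA : ‖A‖ ≤ a)
    (hB : ‖B‖ ≤ b) (hu : ‖u‖ ≤ R) : ‖A + B.flip u‖ ≤ a + b * R :=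
  norm_add_le_of_le hA (B.flip.le_of_opNorm_le_of_le (B.opNorm_flip ▸ hB) hu)

theorem hasFDerivAt_add_apply (hφ : Differentiable ℝ φ) (hψ : Differentiable ℝ ψ) (v : X) :
    HasFDerivAt (fun x => φ x + ψ x u) (fderiv ℝ φ v + (fderiv ℝ ψ v).flip u) v :=
  ((hφ v).hasFDerivAt.add ((hψ v).hasFDerivAt.clm_apply (hasFDerivAt_const u v))).congr_fderiv
    (by simp)

theorem norm_add_apply_sub_add_apply_le {Lφ Lψ : ℝ}
    (hφ : ∀ a b, ‖φ a - φ b‖ ≤ Lφ * ‖a - b‖) (hψ : ∀ a b, ‖ψ a - ψ b‖ ≤ Lψ * ‖a - b‖)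
    (hu : ‖u‖ ≤ R) (a b : X) :
    ‖(φ a + ψ a u) - (φ b + ψ b u)‖ ≤ (Lφ + Lψ * R) * ‖a - b‖ := by
  calc ‖(φ a + ψ a u) - (φ b + ψ b u)‖ = ‖(φ a - φ b) + (ψ a - ψ b) u‖ := by
        rw [sub_apply]; abel_nf
    _ ≤ Lφ * ‖a - b‖ + Lψ * ‖a - b‖ * R :=
        norm_add_le_of_le (hφ a b) ((ψ a - ψ b).le_of_opNorm_le_of_le (hψ a b) hu)
    _ = (Lφ + Lψ * R) * ‖a - b‖ := by ring

theorem norm_add_apply_sub_sub_fderiv_le {M : ℝ} (hM : 0 ≤ M) (hφ : ContDiff ℝ 1 φ)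
    (hψ : ContDiff ℝ 1 ψ) (hDφ : ∀ a b, ‖fderiv ℝ φ a - fderiv ℝ φ b‖ ≤ M * ‖a - b‖)
    (hDψ : ∀ a b, ‖fderiv ℝ ψ a - fderiv ℝ ψ b‖ ≤ M * ‖a - b‖) (hu : ‖u‖ ≤ R) (a b : X) :
    ‖(φ a + ψ a u) - (φ b + ψ b u) - (fderiv ℝ φ b + (fderiv ℝ ψ b).flip u) (a - b)‖ ≤
      M * (1 + R) * ‖a - b‖ ^ 2 := by
  refine norm_sub_sub_le_of_lipschitz_fderiv (by nlinarith [norm_nonneg u])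
    (hasFDerivAt_add_apply (hφ.differentiable one_ne_zero) (hψ.differentiable one_ne_zero))
    (fun v w => ?_) a b
  have hsplit : fderiv ℝ φ v + (fderiv ℝ ψ v).flip u - (fderiv ℝ φ w + (fderiv ℝ ψ w).flip u) =
      (fderiv ℝ φ v - fderiv ℝ φ w) + (fderiv ℝ ψ v - fderiv ℝ ψ w).flip u := by
    ext; simp only [add_apply, sub_apply, ContinuousLinearMap.flip_apply]; abel
  rw [hsplit]
  exact (norm_add_flip_apply_le (hDφ v w) (hDψ v w) hu).trans_eq (by ring)

end ControlAffine

theorem mild_flow_second_order_remainder_general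
    {X : Type*} [NormedAddCommGroup X] [NormedSpace ℝ X] [CompleteSpace X]
    {m : ℕ} {T : ℝ}
    (S : ℝ → X →L[ℝ] X)
    (hScont : ∀ x : X, ContinuousOn (fun σ => S σ x) (Set.Ici (0 : ℝ)))
    (U : Set (EuclideanSpace ℝ (Fin m))) (hUcpt : IsCompact U)
    (f : ℝ → X → X) (G : ℝ → X → EuclideanSpace ℝ (Fin m) →L[ℝ] X)
    {Mf MG : ℝ} (hMf : 0 ≤ Mf) (hMG : 0 ≤ MG)
    (hfmeas : ∀ x : X,
      AEStronglyMeasurable (fun t => f t x) (volume.restrict (Set.Icc (0:ℝ) T)))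
    (hGmeas : ∀ x : X,
      AEStronglyMeasurable (fun t => G t x) (volume.restrict (Set.Icc (0:ℝ) T)))
    (hA : ∀ᵐ t ∂(volume.restrict (Set.Icc (0:ℝ) T)),
        (∀ x y : X, ‖f t x - f t y‖ ≤ Mf * ‖x - y‖) ∧
        (∀ x y : X, ‖G t x - G t y‖ ≤ MG * ‖x - y‖) ∧
        ‖f t 0‖ ≤ Mf ∧ ‖G t 0‖ ≤ MG)
    {M : ℝ} (hM : 0 ≤ M)
    (hDfmeas : ∀ x : X,
      AEStronglyMeasurable (fun t => fderiv ℝ (f t) x) (volume.restrict (Set.Icc (0:ℝ) T)))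
    (hDGmeas : ∀ x : X,
      AEStronglyMeasurable (fun t => fderiv ℝ (G t) x) (volume.restrict (Set.Icc (0:ℝ) T)))
    (hAplus : ∀ᵐ t ∂(volume.restrict (Set.Icc (0:ℝ) T)),
        ContDiff ℝ 1 (f t) ∧ ContDiff ℝ 1 (G t) ∧
        (∀ x : X, ‖fderiv ℝ (f t) x‖ ≤ M) ∧
        (∀ x : X, ‖fderiv ℝ (G t) x‖ ≤ M) ∧
        (∀ x y : X, ‖fderiv ℝ (f t) x - fderiv ℝ (f t) y‖ ≤ M * ‖x - y‖) ∧
        (∀ x y : X, ‖fderiv ℝ (G t) x - fderiv ℝ (G t) y‖ ≤ M * ‖x - y‖))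
    (ubar : ℝ → EuclideanSpace ℝ (Fin m))
    (hubar_meas : AEStronglyMeasurable ubar (volume.restrict (Set.Icc (0:ℝ) T)))
    (hubar_mem : ∀ᵐ t ∂(volume.restrict (Set.Icc (0:ℝ) T)), ubar t ∈ U)
    (Φ : ℝ → ℝ → X → X)
    (hΦ : ∀ s ∈ Set.Icc (0:ℝ) T, ∀ x : X,
      IsMildSol T S (fun τ y => f τ y + G τ y (ubar τ)) s x (fun t => Φ s t x))
    (s : ℝ) (hs : s ∈ Set.Ico (0:ℝ) T) (x : X) :
    ∃ M₄ : ℝ, 0 ≤ M₄ ∧ ∃ δ : ℝ, 0 < δ ∧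
      ∀ η : X, ‖η‖ ≤ δ →
        ∀ z : ℝ → X, ContinuousOn z (Set.Icc s T) →
          (∀ t ∈ Set.Icc s T,
            z t = S (t - s) η +
              ∫ τ in s..t, S (t - τ)
                (fderiv ℝ (f τ) (Φ s τ x) (z τ) +
                  (fderiv ℝ (G τ) (Φ s τ x) (z τ)) (ubar τ))) →
          ∀ t ∈ Set.Icc s T,
            ‖Φ s t (x + η) - Φ s t x - z t‖ ≤ M₄ * ‖η‖ ^ 2 := by
  obtain ⟨CS, hCS0, hCS⟩ := exists_norm_le_of_continuousOn_apply isCompact_Icc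
    fun v => (hScont v).mono (Icc_subset_Ici_self : Icc (0 : ℝ) T ⊆ Ici 0)
  obtain ⟨CU, hCU0, hCU⟩ := hUcpt.isBounded.exists_pos_norm_le
  have hsub : Icc s T ⊆ Icc 0 T := Icc_subset_Icc_left hs.1
  have hle : volume.restrict (Icc s T) ≤ volume.restrict (Icc 0 T) :=
    Measure.restrict_mono hsub le_rfl
  have hAs := ae_restrict_of_ae_restrict_of_subset hsub (hA.and (hAplus.and hubar_mem))
  refine ⟨CS * (M * (1 + CU)) * (CS * Real.exp (CS * (Mf + MG * CU) * (T - s))) ^ 2 *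
      Real.exp (CS * (M * (1 + CU)) * (T - s)) * (T - s),
    mul_nonneg (by positivity) (sub_nonneg.2 hs.2.le), 1, one_pos,
    fun η _ z hzc hzeq => ?_⟩
  refine IsMildSol.norm_sub_sub_le_mul_sq (F := fun τ v => f τ v + G τ v (ubar τ))
    (c := Mf + MG * CU)
    (F' := fun τ v => fderiv ℝ (f τ) v + (fderiv ℝ (G τ) v).flip (ubar τ))
    hScont (fun σ hσ => hCS σ ⟨hσ.1, hσ.2.trans (sub_le_self T hs.1)⟩) hCS0
    (by positivity)
    (fun v => ((hfmeas v).add ((ContinuousLinearMap.id ℝ _).aestronglyMeasurable_comp₂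
      (hGmeas v) hubar_meas)).mono_measure hle)
    ?_ ?_ (by positivity)
    (fun v => ((hDfmeas v).add ((hDGmeas v).clm_flip_apply hubar_meas)).mono_measure hle)
    ?_ ?_ ?_ (hΦ s ⟨hs.1, hs.2.le⟩ (x + η)) (hΦ s ⟨hs.1, hs.2.le⟩ x) ⟨hzc, hzeq⟩
  · filter_upwards [hAs] with τ ⟨⟨hfL, hGL, _, _⟩, _, hu⟩
    exact norm_add_apply_sub_add_apply_le hfL hGL (hCU _ hu)
  · filter_upwards [hAs] with τ ⟨⟨_, _, hf0, hG0⟩, _, hu⟩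
    exact norm_add_le_of_le hf0 ((G τ 0).le_of_opNorm_le_of_le hG0 (hCU _ hu))
  · filter_upwards [hAs] with τ ⟨_, ⟨hf, hG, _⟩, _⟩
    exact (hf.continuous_fderiv one_ne_zero).add (continuous_clm_flip_apply.comp
      ((hG.continuous_fderiv one_ne_zero).prodMk continuous_const))
  · filter_upwards [hAs] with τ ⟨_, ⟨_, _, hDf, hDG, _⟩, hu⟩ v
    exact (norm_add_flip_apply_le (hDf v) (hDG v) (hCU _ hu)).trans_eq (by ring)
  · filter_upwards [hAs] with τ ⟨_, ⟨hf, hG, _, _, hDf, hDG⟩, hu⟩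
    exact norm_add_apply_sub_sub_fderiv_le hM hf hG hDf hDG (hCU _ hu)

/-- second-order remainder estimate for the mild flow: the solution `z(η)`
of the variational equation approximates `Φ̄_{s,·}(x+η) − Φ̄_{s,·}(x)` up to `O(‖η‖²)`,
uniformly in `t ∈ [s,T]`, for all `η` in a small ball. -/
theorem mild_flow_second_order_remainder
    {X : Type*} [NormedAddCommGroup X] [NormedSpace ℝ X] [CompleteSpace X]
    {m : ℕ} {T : ℝ} (hT : 0 < T)
    (S : ℝ → X →L[ℝ] X)
    (hS0 : S 0 = ContinuousLinearMap.id ℝ X)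
    (hSadd : ∀ a b : ℝ, 0 ≤ a → 0 ≤ b → S (a + b) = (S a).comp (S b))
    (hScont : ∀ x : X, ContinuousOn (fun σ => S σ x) (Set.Ici (0 : ℝ)))
    (U : Set (EuclideanSpace ℝ (Fin m))) (hUcpt : IsCompact U) (hUcvx : Convex ℝ U)
    (f : ℝ → X → X) (G : ℝ → X → EuclideanSpace ℝ (Fin m) →L[ℝ] X)
    {Mf MG : ℝ} (hMf : 0 ≤ Mf) (hMG : 0 ≤ MG)
    (hfmeas : ∀ x : X,
      AEStronglyMeasurable (fun t => f t x) (volume.restrict (Set.Icc (0:ℝ) T)))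
    (hGmeas : ∀ x : X,
      AEStronglyMeasurable (fun t => G t x) (volume.restrict (Set.Icc (0:ℝ) T)))
    (hA : ∀ᵐ t ∂(volume.restrict (Set.Icc (0:ℝ) T)),
        (∀ x y : X, ‖f t x - f t y‖ ≤ Mf * ‖x - y‖) ∧
        (∀ x y : X, ‖G t x - G t y‖ ≤ MG * ‖x - y‖) ∧
        ‖f t 0‖ ≤ Mf ∧ ‖G t 0‖ ≤ MG)
    {M : ℝ} (hM : 0 ≤ M)
    (hDfmeas : ∀ x : X,
      AEStronglyMeasurable (fun t => fderiv ℝ (f t) x) (volume.restrict (Set.Icc (0:ℝ) T)))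
    (hDGmeas : ∀ x : X,
      AEStronglyMeasurable (fun t => fderiv ℝ (G t) x) (volume.restrict (Set.Icc (0:ℝ) T)))
    (hAplus : ∀ᵐ t ∂(volume.restrict (Set.Icc (0:ℝ) T)),
        ContDiff ℝ 1 (f t) ∧ ContDiff ℝ 1 (G t) ∧
        (∀ x : X, ‖fderiv ℝ (f t) x‖ ≤ M) ∧
        (∀ x : X, ‖fderiv ℝ (G t) x‖ ≤ M) ∧
        (∀ x y : X, ‖fderiv ℝ (f t) x - fderiv ℝ (f t) y‖ ≤ M * ‖x - y‖) ∧
        (∀ x y : X, ‖fderiv ℝ (G t) x - fderiv ℝ (G t) y‖ ≤ M * ‖x - y‖))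
    (ubar : ℝ → EuclideanSpace ℝ (Fin m))
    (hubar_meas : AEStronglyMeasurable ubar (volume.restrict (Set.Icc (0:ℝ) T)))
    (hubar_mem : ∀ᵐ t ∂(volume.restrict (Set.Icc (0:ℝ) T)), ubar t ∈ U)
    (Φ : ℝ → ℝ → X → X)
    (hΦ : ∀ s ∈ Set.Icc (0:ℝ) T, ∀ x : X,
      IsMildSol T S (fun τ y => f τ y + G τ y (ubar τ)) s x (fun t => Φ s t x))
    (s : ℝ) (hs : s ∈ Set.Ico (0:ℝ) T) (x : X) :
    ∃ M₄ : ℝ, 0 ≤ M₄ ∧ ∃ δ : ℝ, 0 < δ ∧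
      ∀ η : X, ‖η‖ ≤ δ →
        ∀ z : ℝ → X, ContinuousOn z (Set.Icc s T) →
          (∀ t ∈ Set.Icc s T,
            z t = S (t - s) η +
              ∫ τ in s..t, S (t - τ)
                (fderiv ℝ (f τ) (Φ s τ x) (z τ) +
                  (fderiv ℝ (G τ) (Φ s τ x) (z τ)) (ubar τ))) →
          ∀ t ∈ Set.Icc s T,
            ‖Φ s t (x + η) - Φ s t x - z t‖ ≤ M₄ * ‖η‖ ^ 2 :=
  mild_flow_second_order_remainder_general S hScont U hUcpt f G hMf hMG hfmeas hGmeas hA hM hDfmeas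
    hDGmeas hAplus ubar hubar_meas hubar_mem Φ hΦ s hs x
end
end

section
/- Let X be a real Banach space and G : I × X → L(ℝ^m; X) satisfy: for every x ∈ X the map τ ↦ G_τ(x) is strongly measurable, and for a.e. τ the map x ↦ G_τ(x) is M_G-Lipschitz. Let K ⊂ X be a compact set. Then there exists a set J ⊂ I of full Lebesgue measure such that for every t ∈ J and every x ∈ K, (1/h) ∫_t^{t+h} ‖G_τ(x) − G_t(x)‖_{L(ℝ^m;X)} dτ → 0 as h ↓ 0; in particular, along any continuous trajectory t ↦ x_t with values in K, ∫_t^{t+h} ‖G_τ(x_t) − G_t(x_t)‖ dτ = o(h) for a.e. t ∈ I. -/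
/-!
If `f : ℝ → E` is a.e.-strongly measurable on an open set `U`, almost every point of `U` is a
right Lebesgue point of `f`. Near a point where `f` is integrable on some
`(t, t + h]` this is the Lebesgue differentiation theorem along the balls `[t, t + h]`; near a
point where it is not, all the integrals vanish by convention; a covering argument glues these
local statements.

For the theorem, take a countable dense subset of `K` and a time `t` that is a right Lebesgue
point of `τ ↦ G τ y` for each of its elements `y`. Since `G τ` is `M_G`-Lipschitz for a.e. `τ`,
the averages for `x` and for a nearby `y` differ by at most `2 M_G ‖x - y‖`, so `t` is a right
Lebesgue point of `τ ↦ G τ x` for every `x ∈ K`.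
-/

open MeasureTheory Set Filter
open scoped Topology NNReal

theorem measure_eq_zero_of_forall_exists_measure_inter_Ioo_eq_zero {μ : Measure ℝ}
    [NullSingletonClass μ] {B : Set ℝ} (hB : ∀ t ∈ B, ∃ h > 0, μ (B ∩ Ioo t (t + h)) = 0) :
    μ B = 0 := by
  choose! h hpos hnull using hB
  obtain ⟨S, hS, hSV⟩ := TopologicalSpace.isOpen_iUnion_countable
    (fun t : B => Ioo (t : ℝ) (t + h t)) fun _ => isOpen_Ioo
  set V := ⋃ t : B, Ioo (t : ℝ) (t + h t)
  have hBV : μ (B ∩ V) = 0 := by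
    refine measure_mono_null ?_ ((measure_biUnion_null_iff hS).2 fun t _ => hnull t t.2)
    rw [← hSV, inter_iUnion₂]
  -- Points of `B` outside `V` have pairwise disjoint right intervals.
  have hBV' : (B \ V).Countable := by
    refine PairwiseDisjoint.countable_of_Ioo (y := fun t => t + h t) (fun s hs t ht hst => ?_)
      fun t ht => by linarith [hpos t ht.1]
    wlog hlt : s < t generalizing s t
    · exact (this t ht s hs hst.symm (hst.lt_or_gt.resolve_left hlt)).symm
    have : s + h s ≤ t := not_lt.1 fun h' => ht.2 (mem_iUnion.2 ⟨⟨s, hs.1⟩, hlt, h'⟩)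
    exact Set.disjoint_left.2 fun x hx hx' => by simp only [mem_Ioo] at hx hx'; linarith
  exact measure_mono_null (inter_union_sdiff B V).symm.subset
    (measure_union_null hBV (hBV'.measure_zero μ))

section

variable {E : Type*} [NormedAddCommGroup E]

def IsRightLebesguePoint (f : ℝ → E) (t : ℝ) : Prop :=
  Tendsto (fun h : ℝ => h⁻¹ * ∫ τ in t..t + h, ‖f τ - f t‖) (𝓝[>] 0) (𝓝 0)

theorem setAverage_closedBall_eq_inv_mul_intervalIntegral (g : ℝ → ℝ) {t h : ℝ} (hh : 0 < h) :
    ⨍ τ in Metric.closedBall (t + h / 2) (h / 2), g τ = h⁻¹ * ∫ τ in t..t + h, g τ := by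
  have hball : Metric.closedBall (t + h / 2) (h / 2) = Icc t (t + h) := by
    rw [Real.closedBall_eq_Icc]; congr 1 <;> ring
  rw [hball, setAverage_eq, Real.volume_real_Icc_of_le (by linarith), integral_Icc_eq_integral_Ioc,
    ← intervalIntegral.integral_of_le (by linarith), smul_eq_mul, add_sub_cancel_left]

theorem ae_isRightLebesguePoint_of_integrable {f : ℝ → E} (hf : Integrable f) :
    ∀ᵐ t, IsRightLebesguePoint f t := by
  filter_upwards [IsUnifLocDoublingMeasure.ae_tendsto_average_norm_sub volume
    hf.locallyIntegrable 1] with t ht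
  have hhalf : Tendsto (fun h : ℝ => h / 2) (𝓝[>] 0) (𝓝[>] 0) :=
    tendsto_nhdsWithin_iff.2
      ⟨by simpa using ((tendsto_id (x := 𝓝 (0 : ℝ))).div_const 2).mono_left nhdsWithin_le_nhds,
        eventually_nhdsWithin_of_forall fun h (hh : 0 < h) => half_pos hh⟩
  refine (ht (fun h => t + h / 2) (fun h => h / 2) hhalf ?_).congr' ?_
  · filter_upwards [self_mem_nhdsWithin] with h (hh : 0 < h)
    simp only [one_mul, Real.closedBall_eq_Icc, mem_Icc]
    constructor <;> linarith
  · filter_upwards [self_mem_nhdsWithin] with h hh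
    exact setAverage_closedBall_eq_inv_mul_intervalIntegral _ hh

theorem IsRightLebesguePoint.congr {f g : ℝ → E} {t : ℝ} (hf : IsRightLebesguePoint f t)
    (hfg : f =ᶠ[𝓝[≥] t] g) : IsRightLebesguePoint g t := by
  obtain ⟨b, hb, hfg⟩ := mem_nhdsGE_iff_exists_Ico_subset.1 hfg
  refine hf.congr' ?_
  filter_upwards [Ioo_mem_nhdsGT (sub_pos.2 hb)] with h hh
  have hsub : uIcc t (t + h) ⊆ Ico t b := by
    rw [uIcc_of_le (by linarith [hh.1])]
    exact Icc_subset_Ico_right (by linarith [hh.2])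
  rw [hfg (left_mem_Ico.2 hb),
    intervalIntegral.integral_congr fun τ hτ => congrArg (‖· - g t‖) (hfg (hsub hτ))]

theorem ae_isRightLebesguePoint_of_integrableOn {f : ℝ → E} {a b : ℝ}
    (hf : IntegrableOn f (Ioc a b)) :
    ∀ᵐ t ∂volume.restrict (Ioo a b), IsRightLebesguePoint f t := by
  rw [ae_restrict_iff' measurableSet_Ioo]
  filter_upwards [ae_isRightLebesguePoint_of_integrable
    ((integrable_indicator_iff measurableSet_Ioc).2 hf)] with t ht hta
  exact ht.congr (eventually_of_mem (Ico_mem_nhdsGE hta.2) fun τ hτ =>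
    indicator_of_mem (show τ ∈ Ioc a b from ⟨hta.1.trans_le hτ.1, hτ.2.le⟩) f)

theorem ae_isRightLebesguePoint {f : ℝ → E} {U : Set ℝ} (hU : IsOpen U)
    (hf : AEStronglyMeasurable f (volume.restrict U)) :
    ∀ᵐ t ∂volume.restrict U, IsRightLebesguePoint f t := by
  rw [ae_restrict_iff' hU.measurableSet, ae_iff]
  refine measure_eq_zero_of_forall_exists_measure_inter_Ioo_eq_zero fun t ht => ?_
  obtain ⟨htU, htP⟩ := Classical.not_imp.1 ht
  obtain ⟨b, htb, hbU⟩ := exists_Ico_subset_of_mem_nhds (hU.mem_nhds htU) ⟨t + 1, by linarith⟩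
  -- If `f` is integrable on no `(t, t + h]`, the integrals are all `0`, the junk value.
  obtain ⟨h, hh, hint⟩ : ∃ h ∈ Ioo 0 (b - t), IntegrableOn f (Ioc t (t + h)) := by
    by_contra! hni
    refine htP (tendsto_const_nhds.congr' ?_)
    filter_upwards [Ioo_mem_nhdsGT (sub_pos.2 htb)] with h hh
    have hsub : Ioc t (t + h) ⊆ U := fun τ hτ => hbU ⟨hτ.1.le, by linarith [hτ.2, hh.2]⟩
    rw [intervalIntegral.integral_undef, mul_zero]
    rw [intervalIntegrable_iff_integrableOn_Ioc_of_le (by linarith [hh.1])]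
    refine fun hi => hni h hh ?_
    have hm : AEStronglyMeasurable (fun τ => f τ - f t) (volume.restrict (Ioc t (t + h))) :=
      (hf.mono_measure (Measure.restrict_mono hsub le_rfl)).sub aestronglyMeasurable_const
    simpa only [IntegrableOn, Pi.add_def, sub_add_cancel] using
      ((integrable_norm_iff hm).1 hi).add (integrableOn_const (C := f t) measure_Ioc_lt_top.ne)
  refine ⟨h, hh.1, measure_mono_null ?_ (ae_iff.1 ((ae_restrict_iff' measurableSet_Ioo).1
    (ae_isRightLebesguePoint_of_integrableOn hint)))⟩
  exact fun s ⟨hs, hsI⟩ h' => hs fun _ => h' hsI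

theorem intervalIntegral_le_add_mul_of_abs_sub_le {f g : ℝ → ℝ} {a b c : ℝ} (hab : a ≤ b)
    (hc : 0 ≤ c) (hg : ∀ τ, 0 ≤ g τ) (hgm : AEStronglyMeasurable g (volume.restrict (Ioc a b)))
    (hfg : ∀ᵐ τ ∂volume.restrict (Ioc a b), |f τ - g τ| ≤ c) :
    ∫ τ in a..b, f τ ≤ (∫ τ in a..b, g τ) + (b - a) * c := by
  by_cases hf : IntervalIntegrable f volume a b
  · rw [intervalIntegrable_iff_integrableOn_Ioc_of_le hab] at hf
    have hconst : IntegrableOn (fun _ => c) (Ioc a b) := integrableOn_const measure_Ioc_lt_top.ne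
    have hgi : IntegrableOn g (Ioc a b) := by
      refine (hf.norm.add hconst).mono' hgm ?_
      filter_upwards [hfg] with τ hτ
      rw [Real.norm_eq_abs, abs_of_nonneg (hg τ), Pi.add_apply, Real.norm_eq_abs]
      linarith [abs_le.1 hτ, le_abs_self (f τ)]
    rw [intervalIntegral.integral_of_le hab, intervalIntegral.integral_of_le hab]
    calc ∫ τ in Ioc a b, f τ ≤ ∫ τ in Ioc a b, (g τ + c) :=
          integral_mono_ae hf (hgi.add hconst) (hfg.mono fun τ hτ => by linarith [abs_le.1 hτ])
      _ = (∫ τ in Ioc a b, g τ) + (b - a) * c := by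
          rw [integral_add hgi hconst, setIntegral_const, Real.volume_real_Ioc_of_le hab,
            smul_eq_mul]
  · rw [intervalIntegral.integral_undef hf]
    exact add_nonneg (intervalIntegral.integral_nonneg hab fun τ _ => hg τ)
      (mul_nonneg (sub_nonneg.2 hab) hc)

theorem IsRightLebesguePoint.of_mem_closure {Y : Type*} [PseudoMetricSpace Y] {F : ℝ → Y → E}
    {t b : ℝ} {M : ℝ≥0} {s : Set Y} {x : Y} (htb : t < b)
    (hmeas : ∀ y, AEStronglyMeasurable (fun τ => F τ y) (volume.restrict (Ioc t b)))
    (hlip : ∀ᵐ τ ∂volume.restrict (Ioc t b), LipschitzWith M (F τ))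
    (hlipt : LipschitzWith M (F t))
    (hs : ∀ y ∈ s, IsRightLebesguePoint (fun τ => F τ y) t) (hx : x ∈ closure s) :
    IsRightLebesguePoint (fun τ => F τ x) t := by
  refine Metric.tendsto_nhds.2 fun ε hε => ?_
  obtain ⟨y, hyx, hys⟩ : ∃ y ∈ {y | 2 * M * dist x y < ε / 2}, y ∈ s :=
    mem_closure_iff_nhds.1 hx _
      ((isOpen_lt (by fun_prop) continuous_const).mem_nhds (by simpa using half_pos hε))
  have hbound : ∀ τ, LipschitzWith M (F τ) →
      |‖F τ x - F t x‖ - ‖F τ y - F t y‖| ≤ 2 * M * dist x y := fun τ hτ => calc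
    _ ≤ ‖(F τ x - F τ y) - (F t x - F t y)‖ := by
        rw [sub_sub_sub_comm]; exact abs_norm_sub_norm_le _ _
    _ ≤ dist (F τ x) (F τ y) + dist (F t x) (F t y) := by
        rw [dist_eq_norm, dist_eq_norm]; exact norm_sub_le _ _
    _ ≤ M * dist x y + M * dist x y := add_le_add (hτ.dist_le_mul x y) (hlipt.dist_le_mul x y)
    _ = 2 * M * dist x y := by ring
  filter_upwards [Metric.tendsto_nhds.1 (hs y hys) _ (half_pos hε),
    Ioc_mem_nhdsGT (sub_pos.2 htb)] with h hy hh
  have hsub : Ioc t (t + h) ⊆ Ioc t b := Ioc_subset_Ioc_right (by linarith [hh.2])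
  have hint := intervalIntegral_le_add_mul_of_abs_sub_le (f := fun τ => ‖F τ x - F t x‖)
    (g := fun τ => ‖F τ y - F t y‖) (by linarith [hh.1]) (by positivity) (fun _ => norm_nonneg _)
    (((hmeas y).mono_measure (Measure.restrict_mono hsub le_rfl)).sub
      aestronglyMeasurable_const).norm
    ((ae_restrict_of_ae_restrict_of_subset hsub hlip).mono hbound)
  have hx0 : 0 ≤ h⁻¹ * ∫ τ in t..t + h, ‖F τ x - F t x‖ :=
    mul_nonneg (inv_nonneg.2 hh.1.le)
      (intervalIntegral.integral_nonneg (by linarith [hh.1]) fun _ _ => norm_nonneg _)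
  have hxy : h⁻¹ * ∫ τ in t..t + h, ‖F τ x - F t x‖
      ≤ h⁻¹ * (∫ τ in t..t + h, ‖F τ y - F t y‖) + 2 * M * dist x y := calc
    _ ≤ h⁻¹ * ((∫ τ in t..t + h, ‖F τ y - F t y‖) + (t + h - t) * (2 * M * dist x y)) :=
        mul_le_mul_of_nonneg_left hint (inv_nonneg.2 hh.1.le)
    _ = _ := by rw [add_sub_cancel_left, mul_add, inv_mul_cancel_left₀ hh.1.ne']
  rw [Real.dist_0_eq_abs] at hy ⊢
  rw [abs_of_nonneg hx0]
  linarith [le_abs_self (h⁻¹ * ∫ τ in t..t + h, ‖F τ y - F t y‖), hyx.out]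

end

theorem lebesgue_point_uniform_on_compact_general
    {X : Type*} [NormedAddCommGroup X] [NormedSpace ℝ X]
    {m : ℕ} {T : ℝ}
    (G : ℝ → X → EuclideanSpace ℝ (Fin m) →L[ℝ] X)
    (MG : ℝ) (hMG : 0 ≤ MG)
    (hGmeas : ∀ x : X,
      AEStronglyMeasurable (fun τ => G τ x) (volume.restrict (Set.Icc (0:ℝ) T)))
    (hGlip : ∀ᵐ τ ∂(volume.restrict (Set.Icc (0:ℝ) T)),
      ∀ x y : X, ‖G τ x - G τ y‖ ≤ MG * ‖x - y‖)
    (K : Set X) (hK : IsCompact K) :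
    ∃ J : Set ℝ, J ⊆ Set.Ico (0:ℝ) T ∧ volume (Set.Icc (0:ℝ) T \ J) = 0 ∧
      (∀ t ∈ J, ∀ x ∈ K,
        Tendsto (fun h : ℝ => h⁻¹ * ∫ τ in t..t + h, ‖G τ x - G t x‖)
          (nhdsWithin 0 (Set.Ioi 0)) (nhds 0)) ∧
      (∀ xtraj : ℝ → X, ContinuousOn xtraj (Set.Icc (0:ℝ) T) →
        (∀ t ∈ Set.Icc (0:ℝ) T, xtraj t ∈ K) →
        ∀ᵐ t ∂(volume.restrict (Set.Icc (0:ℝ) T)),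
          Tendsto
            (fun h : ℝ => h⁻¹ * ∫ τ in t..t + h, ‖G τ (xtraj t) - G t (xtraj t)‖)
            (nhdsWithin 0 (Set.Ioi 0)) (nhds 0)) := by
  obtain ⟨c, hc, hKc⟩ := hK.isSeparable
  have hLip : ∀ᵐ τ ∂volume.restrict (Icc 0 T), LipschitzWith MG.toNNReal (G τ) :=
    hGlip.mono fun τ hτ => LipschitzWith.of_dist_le_mul fun x y => by
      simpa [dist_eq_norm, hMG] using hτ x y
  set J := {t | t ∈ Ioo 0 T ∧ LipschitzWith MG.toNNReal (G t) ∧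
    ∀ y ∈ c, IsRightLebesguePoint (fun τ => G τ y) t}
  have hJ : ∀ᵐ t ∂volume.restrict (Icc 0 T), t ∈ J := by
    rw [← Measure.restrict_congr_set Ioo_ae_eq_Icc] at hLip ⊢
    filter_upwards [ae_restrict_mem measurableSet_Ioo, hLip, (ae_ball_iff hc).2 fun y _ =>
      ae_isRightLebesguePoint isOpen_Ioo ((hGmeas y).mono_measure
        (Measure.restrict_mono Ioo_subset_Icc_self le_rfl))] with t h₁ h₂ h₃ using ⟨h₁, h₂, h₃⟩
  have hJK : ∀ t ∈ J, ∀ x ∈ K, IsRightLebesguePoint (fun τ => G τ x) t := by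
    rintro t ⟨ht, hLt, hct⟩ x hx
    have hsub : Ioc t T ⊆ Icc 0 T := Ioc_subset_Icc_self.trans (Icc_subset_Icc_left ht.1.le)
    exact IsRightLebesguePoint.of_mem_closure ht.2
      (fun y => (hGmeas y).mono_measure (Measure.restrict_mono hsub le_rfl))
      (ae_restrict_of_ae_restrict_of_subset hsub hLip) hLt hct (hKc hx)
  refine ⟨J, fun t ht => Ioo_subset_Ico_self ht.1, ?_, hJK, fun xtraj _ hxK =>
    hJ.mono fun t ht => hJK t ht _ (hxK t (Ioo_subset_Icc_self ht.1))⟩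
  refine measure_mono_null ?_ (ae_iff.1 ((ae_restrict_iff' measurableSet_Icc).1 hJ))
  exact fun t ⟨htI, htJ⟩ h => htJ (h htI)

/-- Lebesgue-point property of `t ↦ G_t`, uniform over a compact set `K`:
there is a full-measure set `J ⊆ I` such that for every `t ∈ J` and every `x ∈ K` the
averages `(1/h)∫_t^{t+h} ‖G_τ(x) − G_t(x)‖ dτ` tend to `0` as `h ↓ 0`; in particular,
along any continuous trajectory with values in `K`, `∫_t^{t+h} ‖G_τ(x_t) − G_t(x_t)‖ dτ
= o(h)` for a.e. `t ∈ I`. -/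
theorem lebesgue_point_uniform_on_compact
    {X : Type*} [NormedAddCommGroup X] [NormedSpace ℝ X]
    {m : ℕ} {T : ℝ} (hT : 0 < T)
    (G : ℝ → X → EuclideanSpace ℝ (Fin m) →L[ℝ] X)
    (MG : ℝ) (hMG : 0 ≤ MG)
    (hGmeas : ∀ x : X,
      AEStronglyMeasurable (fun τ => G τ x) (volume.restrict (Set.Icc (0:ℝ) T)))
    (hGlip : ∀ᵐ τ ∂(volume.restrict (Set.Icc (0:ℝ) T)),
      ∀ x y : X, ‖G τ x - G τ y‖ ≤ MG * ‖x - y‖)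
    (K : Set X) (hK : IsCompact K) :
    ∃ J : Set ℝ, J ⊆ Set.Ico (0:ℝ) T ∧ volume (Set.Icc (0:ℝ) T \ J) = 0 ∧
      (∀ t ∈ J, ∀ x ∈ K,
        Tendsto (fun h : ℝ => h⁻¹ * ∫ τ in t..t + h, ‖G τ x - G t x‖)
          (nhdsWithin 0 (Set.Ioi 0)) (nhds 0)) ∧
      (∀ xtraj : ℝ → X, ContinuousOn xtraj (Set.Icc (0:ℝ) T) →
        (∀ t ∈ Set.Icc (0:ℝ) T, xtraj t ∈ K) →
        ∀ᵐ t ∂(volume.restrict (Set.Icc (0:ℝ) T)),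
          Tendsto
            (fun h : ℝ => h⁻¹ * ∫ τ in t..t + h, ‖G τ (xtraj t) - G t (xtraj t)‖)
            (nhdsWithin 0 (Set.Ioi 0)) (nhds 0)) :=
  lebesgue_point_uniform_on_compact_general G MG hMG hGmeas hGlip K hK
end
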